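/- arXiv:2110.08040 — 2 statements merged into one kernel-verified Lean document; each statement's English description precedes it below -/
import Mathlib

section
/- Assume conditions (M), (O), (R), (P). Then: (1) the map M : C → 𝒮, M(α) := {μ ∈ Cm : α ≤ μ}, is well defined (its image is contained in 𝒮) and injective; (2) if moreover A is finite and condition (D) holds, then M is a bijection between C and 𝒮. (This is Theorem 18 of the paper, representing the congruences of a (finite) strongly Fregean algebra by the upward closed subsets of Cm whose traces on PIP classes are subgroups.) -/
variable {A : Type*}

/-- `η` is a completely meet irreducible member of `C`, with (unique) cover `p` in `C`. -/
def IsCMI (C : Set (Setoid A)) (η p : Setoid A) : Prop :=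
  η ∈ C ∧ p ∈ C ∧ η < p ∧ ∀ β ∈ C, η < β → p ≤ β

/-- A single up or down transposition between the intervals `I[pq.1, pq.2]`
and `I[rs.1, rs.2]` of `C`. -/
def Persp (C : Set (Setoid A)) (pq rs : Setoid A × Setoid A) : Prop :=
  pq.1 ∈ C ∧ pq.2 ∈ C ∧ rs.1 ∈ C ∧ rs.2 ∈ C ∧
    ((pq.1 = pq.2 ⊓ rs.1 ∧ rs.2 = pq.2 ⊔ rs.1) ∨
      (rs.1 = rs.2 ⊓ pq.1 ∧ pq.2 = rs.2 ⊔ pq.1))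

/-- Projectivity of intervals of `C`: a finite chain of up and down transpositions. -/
def Projective (C : Set (Setoid A)) : Setoid A × Setoid A → Setoid A × Setoid A → Prop :=
  Relation.ReflTransGen (Persp C)

/-- Prime interval projectivity `φ ∼ ψ`: the prime intervals `I[φ,φ⁺]` and `I[ψ,ψ⁺]`
over completely meet irreducible members of `C` are projective. -/
def PIP (C : Set (Setoid A)) (φ ψ : Setoid A) : Prop :=
  ∃ p q, IsCMI C φ p ∧ IsCMI C ψ q ∧ Projective C (φ, p) (ψ, q)

/-- `Θ(a,b)`: the least member of `C` containing the pair `(a, b)`. -/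
def theta (C : Set (Setoid A)) (a b : A) : Setoid A :=
  sInf {s | s ∈ C ∧ s.r a b}

/-- The relation `φ • ψ`: the pairs of `p = φ⁺ = ψ⁺` on which `φ` and `ψ` agree
(the complement of the symmetric difference of `φ` and `ψ` intersected with `p`). -/
def Bul (p φ ψ : Setoid A) (x y : A) : Prop :=
  p.r x y ∧ (φ.r x y ↔ ψ.r x y)

/-- `S ∈ 𝒮`: `S` is an upward closed subset of `Cm` such that for every PIP class `U`
(of an element `η` with cover `p`), the set `(S ∩ U) ∪ {p}` is closed under the Boolean
group operation `•` of `(Ū, •)`. -/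
def InCalS (C : Set (Setoid A)) (S : Set (Setoid A)) : Prop :=
  (∀ μ ∈ S, ∃ p, IsCMI C μ p) ∧
  (∀ μ ∈ S, ∀ ν p, IsCMI C ν p → μ ≤ ν → ν ∈ S) ∧
  ∀ η p, IsCMI C η p → ∀ φ ψ : Setoid A,
    ((φ ∈ S ∧ PIP C φ η) ∨ φ = p) → ((ψ ∈ S ∧ PIP C ψ η) ∨ ψ = p) →
      ∃ σ : Setoid A, ((σ ∈ S ∧ PIP C σ η) ∨ σ = p) ∧ σ.r = Bul p φ ψ

/-!
By (O), a completely meet irreducible `η` with cover `p` agrees with `p` except on the `p`-class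
of `1`, which it splits into its own `1`-class and the rest; by (R), members of `C` are compared
through their `1`-classes. Hence, for `φ ≠ ψ` with common cover `p`, a third element `γ` of the
height-two interval `[φ ⊓ ψ, p]` is completely meet irreducible with cover `p` (by (P)) and is the
relation `φ • ψ`.

The core is that projectivity of `[φ, p]` and `[ψ, p]` produces such a third element. Along a
chain of transpositions starting at `[φ, p]` we keep a completely meet irreducible `η` with cover
`p` that cuts the current prime interval and is linked to `φ` (equal to it, or with a third
element over `φ ⊓ η`). An up-transposition moves `η` to a new `η'`, linked to `η` because both
cut a common prime interval; linkedness is transitive by a pattern count on the `1`-classes.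
This shows `M(α) ∈ 𝒮`, and Zorn's lemma makes `α` the meet of `M(α)`.

Conversely, for finite `A` and `S ∈ 𝒮`, condition (D) and induction on finite `T ⊆ S` show that
every completely meet irreducible above `⋀ T` lies in `S`: when (D) returns two elements of the
PIP class, the third one is their product, which `S` contains. So `M(⋀ S) = S`.
-/

namespace IsCMI

variable {C : Set (Setoid A)} {η μ p q : Setoid A}

theorem mem (h : IsCMI C η p) : η ∈ C := h.1

theorem cover_mem (h : IsCMI C η p) : p ∈ C := h.2.1

theorem lt (h : IsCMI C η p) : η < p := h.2.2.1

theorem le (h : IsCMI C η p) : η ≤ p := h.lt.le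

theorem cover_le (h : IsCMI C η p) {β : Setoid A} (hβ : β ∈ C) (hlt : η < β) : p ≤ β :=
  h.2.2.2 β hβ hlt

theorem cover_unique (h : IsCMI C η p) (h' : IsCMI C η q) : p = q :=
  le_antisymm (h.cover_le h'.cover_mem h'.lt) (h'.cover_le h.cover_mem h.lt)

theorem eq_of_le (hμ : IsCMI C μ p) (hη : IsCMI C η p) (hle : μ ≤ η) : μ = η :=
  by_contra fun hne => (hμ.cover_le hη.mem (lt_of_le_of_ne hle hne)).not_gt hη.lt

end IsCMI

structure IsPrimeInterval (C : Set (Setoid A)) (a b : Setoid A) : Prop where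
  left_mem : a ∈ C
  right_mem : b ∈ C
  lt : a < b
  eq_or_eq : ∀ γ ∈ C, a ≤ γ → γ ≤ b → γ = a ∨ γ = b

theorem IsCMI.isPrimeInterval {C : Set (Setoid A)} {η p : Setoid A} (h : IsCMI C η p) :
    IsPrimeInterval C η p := by
  refine ⟨h.mem, h.cover_mem, h.lt, fun γ hγ hηγ hγp => ?_⟩
  rcases eq_or_lt_of_le hηγ with hηγ | hηγ
  · exact Or.inl hηγ.symm
  · exact Or.inr (le_antisymm hγp (h.cover_le hγ hηγ))

theorem IsPrimeInterval.inf_eq_of_not_le {C : Set (Setoid A)} {a b ζ : Setoid A}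
    (hab : IsPrimeInterval C a b) (hinf : b ⊓ ζ ∈ C) (haζ : a ≤ ζ) (hbζ : ¬ b ≤ ζ) :
    b ⊓ ζ = a :=
  (hab.eq_or_eq _ hinf (le_inf hab.lt.le haζ) inf_le_left).resolve_right
    fun h => hbζ (inf_eq_left.mp h)

theorem persp_symm {C : Set (Setoid A)} {I J : Setoid A × Setoid A} (h : Persp C I J) :
    Persp C J I :=
  let ⟨h₁, h₂, h₃, h₄, h⟩ := h
  ⟨h₃, h₄, h₁, h₂, h.symm⟩

theorem Projective.symm {C : Set (Setoid A)} {I J : Setoid A × Setoid A}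
    (h : Projective C I J) : Projective C J I :=
  Relation.ReflTransGen.mono (fun _ _ => persp_symm) _ _ (Relation.ReflTransGen.swap _ _ h)

theorem rel_theta (C : Set (Setoid A)) (a b : A) : (theta C a b).r a b :=
  fun _ hs => hs.2

theorem theta_le {C : Set (Setoid A)} {a b : A} {s : Setoid A} (hs : s ∈ C) (h : s.r a b) :
    theta C a b ≤ s :=
  sInf_le ⟨hs, h⟩

theorem bul_comm (p φ ψ : Setoid A) : Bul p φ ψ = Bul p ψ φ := by
  funext x y
  exact propext (and_congr_right fun _ => Iff.comm)

theorem bul_self (p φ : Setoid A) : Bul p φ φ = p.r := by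
  funext x y
  exact propext (and_iff_left Iff.rfl)

theorem bul_cover_left {p ψ : Setoid A} (h : ψ ≤ p) : Bul p p ψ = ψ.r := by
  funext x y
  exact propext ⟨fun hxy => hxy.2.mp hxy.1, fun hxy => ⟨h hxy, iff_of_true (h hxy) hxy⟩⟩

structure IsCongruenceLattice (C : Set (Setoid A)) : Prop where
  sInf_mem : ∀ S ⊆ C, sInf S ∈ C
  sSup_mem : ∀ S ⊆ C, sSup S ∈ C
  rel_sSup_iff : ∀ D ⊆ C, D.Nonempty → DirectedOn (· ≤ ·) D →
    ∀ x y : A, (sSup D).r x y ↔ ∃ s ∈ D, s.r x y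

namespace IsCongruenceLattice

variable {C : Set (Setoid A)} (hC : IsCongruenceLattice C)
include hC

theorem inf_mem {a b : Setoid A} (ha : a ∈ C) (hb : b ∈ C) : a ⊓ b ∈ C := by
  simpa [sInf_pair] using hC.sInf_mem {a, b} (Set.pair_subset ha hb)

theorem sup_mem {a b : Setoid A} (ha : a ∈ C) (hb : b ∈ C) : a ⊔ b ∈ C := by
  simpa [sSup_pair] using hC.sSup_mem {a, b} (Set.pair_subset ha hb)

theorem theta_mem (a b : A) : theta C a b ∈ C :=
  hC.sInf_mem _ fun _ hs => hs.1

theorem persp_inf_sup {b c : Setoid A} (hb : b ∈ C) (hc : c ∈ C) :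
    Persp C (b ⊓ c, b) (c, b ⊔ c) :=
  ⟨hC.inf_mem hb hc, hb, hc, hC.sup_mem hb hc, Or.inl ⟨rfl, rfl⟩⟩

theorem exists_isCMI {base : Setoid A} {x y : A} (hbase : base ∈ C) (hxy : ¬ base.r x y) :
    ∃ η, base ≤ η ∧ ¬ η.r x y ∧ IsCMI C η (η ⊔ theta C x y) := by
  obtain ⟨m, hbm, hm⟩ := zorn_le_nonempty₀ {δ | δ ∈ C ∧ base ≤ δ ∧ ¬ δ.r x y}
    (fun c hc hchain δ hδ => ⟨sSup c,
      ⟨hC.sSup_mem c fun z hz => (hc hz).1, (hc hδ).2.1.trans (le_sSup hδ), fun hr => by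
        obtain ⟨z, hz, hrz⟩ :=
          (hC.rel_sSup_iff c (fun z hz => (hc hz).1) ⟨δ, hδ⟩ hchain.directedOn x y).mp hr
        exact (hc hz).2.2 hrz⟩,
      fun _ hz => le_sSup hz⟩)
    base ⟨hbase, le_rfl, hxy⟩
  obtain ⟨hmC, -, hmxy⟩ := hm.prop
  refine ⟨m, hbm, hmxy, hmC, hC.sup_mem hmC (hC.theta_mem x y),
    lt_of_le_of_ne le_sup_left fun h => hmxy ?_, fun β hβ hmβ => ?_⟩
  · exact (h ▸ le_sup_right : theta C x y ≤ m) (rel_theta C x y)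
  · have hβxy : β.r x y := by
      by_contra hβxy
      exact hmβ.not_ge (hm.2 ⟨hβ, hbm.trans hmβ.le, hβxy⟩ hmβ.le)
    exact sup_le hmβ.le (theta_le hβ hβxy)

end IsCongruenceLattice

/-- Condition (M). -/
def IsModularOn (C : Set (Setoid A)) : Prop :=
  ∀ x ∈ C, ∀ y ∈ C, ∀ z ∈ C, x ≤ z → x ⊔ y ⊓ z = (x ⊔ y) ⊓ z

/-- Condition (O). -/
def IsThetaOneSeparating (one : A) (C : Set (Setoid A)) : Prop :=
  ∀ α ∈ C, ∀ a b : A, α ⊔ theta C one a = α ⊔ theta C one b ↔ α.r a b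

/-- Condition (R). -/
def IsOneRegular (one : A) (C : Set (Setoid A)) : Prop :=
  ∀ α ∈ C, ∀ β ∈ C, (∀ x : A, α.r one x ↔ β.r one x) → α = β

/-- Condition (P). -/
def IsPIPCoverInvariant (C : Set (Setoid A)) : Prop :=
  ∀ φ ψ p q : Setoid A, IsCMI C φ p → IsCMI C ψ q → Projective C (φ, p) (ψ, q) → p = q

/-- Condition (D). -/
def IsPIPDistributive (C : Set (Setoid A)) : Prop :=
  ∀ α ∈ C, ∀ β ∈ C, ∀ η p, IsCMI C η p → α ⊓ β ≤ η →
    ∃ μ₁ μ₂ : Setoid A, (μ₁ = ⊤ ∨ PIP C μ₁ η) ∧ (μ₂ = ⊤ ∨ PIP C μ₂ η) ∧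
      α ≤ μ₁ ∧ β ≤ μ₂ ∧ μ₁ ⊓ μ₂ ≤ η

structure IsFregeanLattice (one : A) (C : Set (Setoid A)) : Prop
    extends IsCongruenceLattice C where
  modular : IsModularOn C
  separating : IsThetaOneSeparating one C
  regular : IsOneRegular one C
  pip_cover : IsPIPCoverInvariant C

section Modular

variable {C : Set (Setoid A)} (hC : IsCongruenceLattice C) (hM : IsModularOn C)
include hC hM

theorem IsPrimeInterval.sup_right {b c : Setoid A} (h : IsPrimeInterval C (b ⊓ c) b)
    (hc : c ∈ C) : IsPrimeInterval C c (b ⊔ c) := by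
  refine ⟨hc, hC.sup_mem h.right_mem hc,
    lt_of_le_of_ne le_sup_right fun he => h.lt.ne (inf_eq_left.mpr (le_sup_left.trans he.ge)),
    fun γ hγ hcγ hγd => ?_⟩
  rcases h.eq_or_eq (b ⊓ γ) (hC.inf_mem h.right_mem hγ) (inf_le_inf_left b hcγ) inf_le_left
    with he | he
  · left
    calc γ = (c ⊔ b) ⊓ γ := (inf_eq_right.mpr (sup_comm b c ▸ hγd)).symm
      _ = c ⊔ b ⊓ γ := (hM c hc b h.right_mem γ hγ hcγ).symm
      _ = c := by rw [he]; exact sup_eq_left.mpr inf_le_right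
  · exact Or.inr (le_antisymm hγd (sup_le (inf_eq_left.mp he) hcγ))

theorem IsPrimeInterval.inf_left {b c : Setoid A} (h : IsPrimeInterval C c (b ⊔ c))
    (hb : b ∈ C) : IsPrimeInterval C (b ⊓ c) b := by
  refine ⟨hC.inf_mem hb h.left_mem, hb,
    lt_of_le_of_ne inf_le_left fun he => h.lt.ne (sup_eq_right.mpr (inf_eq_left.mp he)).symm,
    fun γ hγ hγl hγb => ?_⟩
  rcases h.eq_or_eq (γ ⊔ c) (hC.sup_mem hγ h.left_mem) le_sup_right (sup_le_sup_right hγb c)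
    with he | he
  · exact Or.inl (le_antisymm (le_inf hγb (le_sup_left.trans he.le)) hγl)
  · right
    calc γ = γ ⊔ c ⊓ b := (sup_eq_left.mpr ((inf_comm c b).trans_le hγl)).symm
      _ = (γ ⊔ c) ⊓ b := hM γ hγ c h.left_mem b hb hγb
      _ = b := by rw [he]; exact inf_eq_right.mpr le_sup_left

end Modular

namespace IsCMI

variable {C : Set (Setoid A)} {η η₁ η₂ p : Setoid A}

theorem sup_eq (hC : IsCongruenceLattice C) (h : IsCMI C η p) {ζ : Setoid A} (hζ : ζ ∈ C)
    (hζp : ζ ≤ p) (hζη : ¬ ζ ≤ η) : η ⊔ ζ = p :=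
  le_antisymm (sup_le h.le hζp) (h.cover_le (hC.sup_mem h.mem hζ)
    (lt_of_le_of_ne le_sup_left fun he => hζη (le_sup_right.trans he.ge)))

theorem sup_eq_of_ne (hC : IsCongruenceLattice C) (h1 : IsCMI C η₁ p) (h2 : IsCMI C η₂ p)
    (hne : η₁ ≠ η₂) : η₁ ⊔ η₂ = p :=
  h1.sup_eq hC h2.mem h2.le fun hle => hne (h2.eq_of_le h1 hle).symm

theorem inf_isPrimeInterval (hC : IsCongruenceLattice C) (hM : IsModularOn C)
    (h1 : IsCMI C η₁ p) (h2 : IsCMI C η₂ p) (hne : η₁ ≠ η₂) :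
    IsPrimeInterval C (η₁ ⊓ η₂) η₁ := by
  have h := h2.isPrimeInterval
  rw [← h1.sup_eq_of_ne hC h2 hne] at h
  exact h.inf_left hC hM h1.mem

theorem sup_theta_eq (hC : IsCongruenceLattice C) (h : IsCMI C η p) {a b : A}
    (hab : ¬ η.r a b) : η ⊔ theta C a b = p ⊔ theta C a b :=
  le_antisymm (sup_le_sup_right h.le _) (sup_le (h.cover_le (hC.sup_mem h.mem (hC.theta_mem a b))
    (lt_of_le_of_ne le_sup_left fun he => hab ((le_sup_right.trans he.ge) (rel_theta C a b))))
    le_sup_right)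

theorem rel_iff {one : A} (hC : IsCongruenceLattice C) (hO : IsThetaOneSeparating one C)
    (h : IsCMI C η p) {x y : A} : η.r x y ↔ p.r x y ∧ (η.r one x ↔ η.r one y) := by
  refine ⟨fun hxy => ⟨h.le hxy, fun hx => η.trans' hx hxy, fun hy => η.trans' hy (η.symm' hxy)⟩,
    fun ⟨hp, hiff⟩ => ?_⟩
  by_cases hx : η.r one x
  · exact η.trans' (η.symm' hx) (hiff.mp hx)
  refine (hO η h.mem x y).mp ?_
  rw [h.sup_theta_eq hC hx, h.sup_theta_eq hC (mt hiff.mpr hx)]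
  exact (hO p h.cover_mem x y).mpr hp

end IsCMI

section Regular

variable {one : A} {C : Set (Setoid A)} (hC : IsCongruenceLattice C) (hR : IsOneRegular one C)
include hC hR

theorem le_of_forall_rel_one {α β : Setoid A} (hα : α ∈ C) (hβ : β ∈ C)
    (h : ∀ u, α.r one u → β.r one u) : α ≤ β :=
  inf_eq_left.mp (hR _ (hC.inf_mem hα hβ) _ hα fun u => ⟨And.left, fun hu => ⟨hu, h u hu⟩⟩)

theorem exists_rel_one_of_lt {α β : Setoid A} (hα : α ∈ C) (hβ : β ∈ C) (hlt : α < β) :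
    ∃ u, β.r one u ∧ ¬ α.r one u := by
  by_contra! h
  exact hlt.not_ge (le_of_forall_rel_one hC hR hβ hα h)

theorem IsPrimeInterval.exists_isCMI_persp {a b base : Setoid A} (hab : IsPrimeInterval C a b)
    (hbase : base ∈ C) (habase : a ≤ base) (hbbase : ¬ b ≤ base) :
    ∃ η, base ≤ η ∧ ¬ b ≤ η ∧ IsCMI C η (η ⊔ b) ∧ Persp C (a, b) (η, η ⊔ b) := by
  obtain ⟨u, hbu, hau⟩ := exists_rel_one_of_lt hC hR hab.left_mem hab.right_mem hab.lt
  have hbaseu : ¬ base.r one u := fun h =>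
    hau ((hab.inf_eq_of_not_le (hC.inf_mem hab.right_mem hbase) habase hbbase).le ⟨hbu, h⟩)
  obtain ⟨η, hbη, hηu, hη⟩ := hC.exists_isCMI hbase hbaseu
  have hb : a ⊔ theta C one u = b :=
    (hab.eq_or_eq _ (hC.sup_mem hab.left_mem (hC.theta_mem _ _)) le_sup_left
      (sup_le hab.lt.le (theta_le hab.right_mem hbu))).resolve_left
      fun h => hau ((le_sup_right.trans h.le) (rel_theta C one u))
  have hbη' : ¬ b ≤ η := fun h => hηu (h hbu)
  have hcover : η ⊔ theta C one u = η ⊔ b := by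
    rw [← hb, ← sup_assoc, sup_eq_left.mpr (habase.trans hbη)]
  refine ⟨η, hbη, hbη', hcover ▸ hη, ?_⟩
  have h := hC.persp_inf_sup hab.right_mem hη.mem
  rwa [hab.inf_eq_of_not_le (hC.inf_mem hab.right_mem hη.mem) (habase.trans hbη) hbη',
    sup_comm] at h

theorem IsPrimeInterval.isCMI_of_projective (hP : IsPIPCoverInvariant C) {γ η p : Setoid A}
    (hγ : IsPrimeInterval C γ p) (hη : IsCMI C η p) (hproj : Projective C (γ, p) (η, p)) :
    IsCMI C γ p := by
  refine ⟨hγ.left_mem, hγ.right_mem, hγ.lt, fun β hβ hγβ => by_contra fun hpβ => ?_⟩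
  obtain ⟨ζ, hβζ, hpζ, hζ, hpersp⟩ := hγ.exists_isCMI_persp hC hR hβ hγβ.le hpβ
  have hcover : ζ ⊔ p = p := hP ζ η _ p hζ hη (.head (persp_symm hpersp) hproj)
  rcases hγ.eq_or_eq ζ hζ.mem (hγβ.le.trans hβζ) (le_sup_left.trans hcover.le) with h | h
  · exact hγβ.not_ge (h ▸ hβζ)
  · exact hpζ h.ge

end Regular

structure IsThirdElement (C : Set (Setoid A)) (p η₁ η₂ γ : Setoid A) : Prop where
  mem : γ ∈ C
  inf_le : η₁ ⊓ η₂ ≤ γ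
  le : γ ≤ p
  ne_inf : γ ≠ η₁ ⊓ η₂
  ne_left : γ ≠ η₁
  ne_right : γ ≠ η₂
  ne_cover : γ ≠ p

namespace IsThirdElement

variable {one : A} {C : Set (Setoid A)} {p η₁ η₂ γ : Setoid A}

theorem symm (h : IsThirdElement C p η₁ η₂ γ) : IsThirdElement C p η₂ η₁ γ :=
  ⟨h.mem, inf_comm η₂ η₁ ▸ h.inf_le, h.le, inf_comm η₁ η₂ ▸ h.ne_inf, h.ne_right, h.ne_left,
    h.ne_cover⟩

theorem ne (h : IsThirdElement C p η₁ η₂ γ) (h1 : IsCMI C η₁ p) : η₁ ≠ η₂ := by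
  rintro rfl
  rcases h1.isPrimeInterval.eq_or_eq γ h.mem (by simpa using h.inf_le) h.le with he | he
  exacts [h.ne_left he, h.ne_cover he]

section Modular

variable (hC : IsCongruenceLattice C) (hM : IsModularOn C)
  (h1 : IsCMI C η₁ p) (h2 : IsCMI C η₂ p) (h : IsThirdElement C p η₁ η₂ γ)
include hC hM h1 h2 h

theorem inf_left_eq : γ ⊓ η₁ = η₁ ⊓ η₂ := by
  rcases (h1.inf_isPrimeInterval hC hM h2 (h.ne h1)).eq_or_eq (γ ⊓ η₁)
    (hC.inf_mem h.mem h1.mem) (le_inf h.inf_le inf_le_left) inf_le_right with he | he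
  · exact he
  rcases h1.isPrimeInterval.eq_or_eq γ h.mem (inf_eq_right.mp he) h.le with he' | he'
  exacts [absurd he' h.ne_left, absurd he' h.ne_cover]

theorem sup_left_eq : γ ⊔ η₁ = p := by
  rw [sup_comm]
  exact h1.sup_eq hC h.mem h.le fun hle =>
    h.ne_inf ((inf_eq_left.mpr hle).symm.trans (h.inf_left_eq hC hM h1 h2))

theorem isPrimeInterval : IsPrimeInterval C γ p := by
  have hprime := h1.inf_isPrimeInterval hC hM h2 (h.ne h1)
  rw [← h.inf_left_eq hC hM h1 h2, inf_comm] at hprime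
  have hprime' := hprime.sup_right hC hM h.mem
  rwa [sup_comm, h.sup_left_eq hC hM h1 h2] at hprime'

theorem projective : Projective C (γ, p) (η₁, p) := by
  have e1 : η₂ ⊓ γ = η₂ ⊓ η₁ := by rw [inf_comm, h.symm.inf_left_eq hC hM h2 h1]
  have e2 : η₂ ⊔ γ = p := by rw [sup_comm, h.symm.sup_left_eq hC hM h2 h1]
  have s1 := hC.persp_inf_sup h2.mem h.mem
  have s2 := hC.persp_inf_sup h2.mem h1.mem
  rw [e1, e2] at s1
  rw [h2.sup_eq_of_ne hC h1 (h.ne h1).symm] at s2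
  exact .head (persp_symm s1) (.single s2)

theorem isCMI (hR : IsOneRegular one C) (hP : IsPIPCoverInvariant C) : IsCMI C γ p :=
  (h.isPrimeInterval hC hM h1 h2).isCMI_of_projective hC hR hP h1 (h.projective hC hM h1 h2)

theorem rel_one_iff (hO : IsThetaOneSeparating one C) (hR : IsOneRegular one C) {u : A} :
    γ.r one u ↔ p.r one u ∧ (η₁.r one u ↔ η₂.r one u) := by
  have agree : ∀ {v}, γ.r one v → (η₁.r one v ↔ η₂.r one v) := fun hv =>
    ⟨fun h1v => ((h.inf_left_eq hC hM h1 h2).le ⟨hv, h1v⟩).2,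
      fun h2v => ((h.symm.inf_left_eq hC hM h2 h1).le ⟨hv, h2v⟩).2⟩
  refine ⟨fun hu => ⟨h.le hu, agree hu⟩, fun ⟨hpu, hiff⟩ => ?_⟩
  by_cases h1u : η₁.r one u
  · exact h.inf_le ⟨h1u, hiff.mp h1u⟩
  -- any `z` in `γ` but not in `η₁ ⊓ η₂` is, like `u`, outside both `1`-classes
  obtain ⟨z, hγz, hz⟩ := exists_rel_one_of_lt hC hR (hC.inf_mem h1.mem h2.mem) h.mem
    (lt_of_le_of_ne h.inf_le h.ne_inf.symm)
  have h1z : ¬ η₁.r one z := fun h1z => hz ⟨h1z, (agree hγz).mp h1z⟩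
  have hpzu : p.r z u := p.trans' (p.symm' (h.le hγz)) hpu
  have hzu : (η₁ ⊓ η₂).r z u :=
    ⟨(h1.rel_iff hC hO).mpr ⟨hpzu, iff_of_false h1z h1u⟩,
      (h2.rel_iff hC hO).mpr ⟨hpzu, iff_of_false (mt (agree hγz).mpr h1z) (mt hiff.mpr h1u)⟩⟩
  exact γ.trans' hγz (h.inf_le hzu)

end Modular

variable (hF : IsFregeanLattice one C) (h1 : IsCMI C η₁ p) (h2 : IsCMI C η₂ p)
  (h : IsThirdElement C p η₁ η₂ γ)
include hF h1 h2 h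

theorem rel_eq : γ.r = Bul p η₁ η₂ := by
  have hC := hF.toIsCongruenceLattice
  funext x y
  apply propext
  rw [(h.isCMI hC hF.modular h1 h2 hF.regular hF.pip_cover).rel_iff hC hF.separating, Bul,
    h1.rel_iff hC hF.separating, h2.rel_iff hC hF.separating,
    h.rel_one_iff hC hF.modular h1 h2 hF.separating hF.regular,
    h.rel_one_iff hC hF.modular h1 h2 hF.separating hF.regular]
  refine and_congr_right fun hxy => ?_
  by_cases hx : p.r one x
  · have hy : p.r one y := p.trans' hx hxy
    simp only [hx, hy, hxy, true_and]
    tauto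
  · have hy : ¬ p.r one y := fun hy => hx (p.trans' hy (p.symm' hxy))
    have hη : ∀ {η u}, η ≤ p → ¬ p.r one u → ¬ η.r one u := fun hle hu h => hu (hle h)
    simp [hx, hy, hη h1.le hx, hη h1.le hy, hη h2.le hx, hη h2.le hy]

end IsThirdElement

theorem IsPrimeInterval.exists_isThirdElement {C : Set (Setoid A)} (hC : IsCongruenceLattice C)
    (hM : IsModularOn C) {a b η₁ η₂ p : Setoid A} (hab : IsPrimeInterval C a b) (hbp : b ≤ p)
    (h1 : IsCMI C η₁ p) (h2 : IsCMI C η₂ p) (hne : η₁ ≠ η₂) (ha1 : a ≤ η₁) (ha2 : a ≤ η₂)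
    (hb1 : ¬ b ≤ η₁) (hb2 : ¬ b ≤ η₂) : ∃ γ, IsThirdElement C p η₁ η₂ γ := by
  have hm := hC.inf_mem h1.mem h2.mem
  have hcut : ∀ {η}, IsCMI C η p → η₁ ⊓ η₂ ≤ η → a ≤ η → ¬ b ≤ η →
      (η₁ ⊓ η₂ ⊔ b) ⊓ η = η₁ ⊓ η₂ := fun hη hmη haη hbη => by
    rw [← hM _ hm b hab.right_mem _ hη.mem hmη,
      hab.inf_eq_of_not_le (hC.inf_mem hab.right_mem hη.mem) haη hbη]
    exact sup_eq_left.mpr (le_inf ha1 ha2)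
  have e1 := hcut h1 inf_le_left ha1 hb1
  have e2 := hcut h2 inf_le_right ha2 hb2
  refine ⟨η₁ ⊓ η₂ ⊔ b, hC.sup_mem hm hab.right_mem, le_sup_left,
    sup_le (inf_le_left.trans h1.le) hbp, fun he => hb1 ?_, fun he => ?_, fun he => ?_,
    fun he => ?_⟩
  · exact (le_sup_right.trans he.le).trans inf_le_left
  · rw [he, inf_idem] at e1
    exact hne (h1.eq_of_le h2 (inf_eq_left.mp e1.symm))
  · rw [he, inf_idem] at e2
    exact hne (h2.eq_of_le h1 (inf_eq_right.mp e2.symm)).symm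
  · rw [he, inf_eq_right.mpr h1.le] at e1
    exact hne (h1.eq_of_le h2 (inf_eq_left.mp e1.symm))

namespace IsThirdElement

variable {one : A} {C : Set (Setoid A)} {p η₁ η₂ η₃ τ τ' : Setoid A}
  (hF : IsFregeanLattice one C) (h1 : IsCMI C η₁ p) (h2 : IsCMI C η₂ p) (h3 : IsCMI C η₃ p)
  (h12 : IsThirdElement C p η₁ η₂ τ) (h23 : IsThirdElement C p η₂ η₃ τ')
include hF h1 h2 h3 h12 h23

theorem exists_isThirdElement_of_not_le (hτ : ¬ τ ⊓ τ' ≤ η₁) (h13 : η₁ ≠ η₃) :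
    ∃ γ, IsThirdElement C p η₁ η₃ γ := by
  obtain ⟨hC, hM, hO, hR, -⟩ := hF
  have hbC : τ ⊓ τ' ∈ C := hC.inf_mem h12.mem h23.mem
  have agree : ∀ {u}, (τ ⊓ τ').r one u → (η₁.r one u ↔ η₃.r one u) := fun hu =>
    ((h12.rel_one_iff hC hM h1 h2 hO hR).mp hu.1).2.trans
      ((h23.rel_one_iff hC hM h2 h3 hO hR).mp hu.2).2
  have hprime : IsPrimeInterval C (τ ⊓ τ' ⊓ η₁) (τ ⊓ τ') := by
    have h := h1.isPrimeInterval
    rw [← h1.sup_eq hC hbC (inf_le_left.trans h12.le) hτ, sup_comm] at h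
    exact h.inf_left hC hM hbC
  have hτ3 : ¬ τ ⊓ τ' ≤ η₃ := fun hle =>
    hτ (le_of_forall_rel_one hC hR hbC h1.mem fun _ hu => (agree hu).mpr (hle hu))
  have hmeet : τ ⊓ τ' ⊓ η₁ ≤ η₃ :=
    le_of_forall_rel_one hC hR (hC.inf_mem hbC h1.mem) h3.mem fun _ hu => (agree hu.1).mp hu.2
  exact hprime.exists_isThirdElement hC hM (inf_le_left.trans h12.le) h1 h3 h13 inf_le_right
    hmeet hτ hτ3

theorem false_of_separated_by_all (hτ : τ ⊓ τ' ≤ η₁) (x y : A) (hx : p.r one x)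
    (hy : p.r one y) (e1 : η₁.r one x ↔ ¬ η₁.r one y) (e2 : η₂.r one x ↔ ¬ η₂.r one y)
    (e3 : η₃.r one x ↔ ¬ η₃.r one y) : False := by
  have hxy : p.r x y := p.trans' (p.symm' hx) hy
  have sep : ∀ {η}, IsCMI C η p → (η.r one x ↔ ¬ η.r one y) → ¬ η.r x y := fun hη e hr => by
    rw [hη.rel_iff hF.toIsCongruenceLattice hF.separating] at hr
    tauto
  have hr : (τ ⊓ τ').r x y :=
    ⟨by rw [h12.rel_eq hF h1 h2]; exact ⟨hxy, iff_of_false (sep h1 e1) (sep h2 e2)⟩,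
      by rw [h23.rel_eq hF h2 h3]; exact ⟨hxy, iff_of_false (sep h2 e2) (sep h3 e3)⟩⟩
  exact sep h1 e1 (hτ hr)

theorem isThirdElement_of_le (hτ : τ ⊓ τ' ≤ η₁) : IsThirdElement C p η₁ η₃ η₂ := by
  have hC := hF.toIsCongruenceLattice
  have hR := hF.regular
  have hanti := h12.false_of_separated_by_all hF h1 h2 h3 h23 hτ
  obtain ⟨u, hτu, hu⟩ := exists_rel_one_of_lt hC hR (hC.inf_mem h1.mem h2.mem) h12.mem
    (lt_of_le_of_ne h12.inf_le h12.ne_inf.symm)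
  obtain ⟨hpu, h12u⟩ := (h12.rel_one_iff hC hF.modular h1 h2 hF.separating hR).mp hτu
  have h1u : ¬ η₁.r one u := fun h1u => hu ⟨h1u, h12u.mp h1u⟩
  have h2u : ¬ η₂.r one u := mt h12u.mpr h1u
  have h3u : η₃.r one u := by_contra fun h3u => hanti one u (p.refl' one) hpu
    (iff_of_true (η₁.refl' one) h1u) (iff_of_true (η₂.refl' one) h2u)
    (iff_of_true (η₃.refl' one) h3u)
  have hle : η₁ ⊓ η₃ ≤ η₂ := le_of_forall_rel_one hC hR (hC.inf_mem h1.mem h3.mem) h2.mem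
    fun v hv => by_contra fun h2v => by
      -- with such a `v`, every `w` in the `1`-class of `η₂` is in that of `η₃`, so `η₂ ≤ τ'`
      have hle' : η₂ ≤ τ' := le_of_forall_rel_one hC hR h2.mem h23.mem fun w h2w =>
        (h23.rel_one_iff hC hF.modular h2 h3 hF.separating hR).mpr
          ⟨h2.le h2w, iff_of_true h2w (by_contra fun h3w => by
            by_cases h1w : η₁.r one w
            · exact hanti w u (h2.le h2w) hpu (iff_of_true h1w h1u) (iff_of_true h2w h2u)
                (iff_of_false h3w (not_not_intro h3u))
            · exact hanti w v (h2.le h2w) (h1.le hv.1) (iff_of_false h1w (not_not_intro hv.1))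
                (iff_of_true h2w h2v) (iff_of_false h3w (not_not_intro hv.2)))⟩
      exact h23.ne_left (h2.eq_of_le (h23.isCMI hC hF.modular h2 h3 hR hF.pip_cover) hle').symm
  exact ⟨h2.mem, hle, h2.le,
    fun he => h12.ne h1 (h2.eq_of_le h1 (he.le.trans inf_le_left)).symm,
    (h12.ne h1).symm, h23.ne h2, h2.lt.ne⟩

theorem trans (h13 : η₁ ≠ η₃) : ∃ γ, IsThirdElement C p η₁ η₃ γ := by
  by_cases hτ : τ ⊓ τ' ≤ η₁
  · exact ⟨η₂, h12.isThirdElement_of_le hF h1 h2 h3 h23 hτ⟩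
  · exact h12.exists_isThirdElement_of_not_le hF h1 h2 h3 h23 hτ h13

end IsThirdElement

def Linked (C : Set (Setoid A)) (p φ ψ : Setoid A) : Prop :=
  φ = ψ ∨ ∃ γ, IsThirdElement C p φ ψ γ

theorem Linked.trans {one : A} {C : Set (Setoid A)} (hF : IsFregeanLattice one C)
    {p φ η ψ : Setoid A} (hφ : IsCMI C φ p) (hη : IsCMI C η p) (hψ : IsCMI C ψ p)
    (h₁ : Linked C p φ η) (h₂ : Linked C p η ψ) : Linked C p φ ψ := by
  rcases h₁ with rfl | ⟨γ, hγ⟩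
  · exact h₂
  rcases h₂ with rfl | ⟨γ', hγ'⟩
  · exact Or.inr ⟨γ, hγ⟩
  by_cases h : φ = ψ
  · exact Or.inl h
  · exact Or.inr (hγ.trans hF hφ hη hψ hγ' h)

def CutByLinked (C : Set (Setoid A)) (p φ a b : Setoid A) : Prop :=
  b ≤ p ∧ ∃ η, IsCMI C η p ∧ a ≤ η ∧ ¬ b ≤ η ∧ Linked C p φ η

namespace CutByLinked

variable {one : A} {C : Set (Setoid A)} {p φ : Setoid A}

theorem inf_left {a d : Setoid A} (h : CutByLinked C p φ a (d ⊔ a)) :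
    CutByLinked C p φ (d ⊓ a) d :=
  let ⟨hp, η, hη, haη, hdη, hl⟩ := h
  ⟨le_sup_left.trans hp, η, hη, inf_le_right.trans haη, fun hd => hdη (sup_le hd haη), hl⟩

theorem sup_right (hF : IsFregeanLattice one C) (hφ : IsCMI C φ p) {b c : Setoid A}
    (h : CutByLinked C p φ (b ⊓ c) b) (hbc : IsPrimeInterval C (b ⊓ c) b) (hc : c ∈ C)
    (hproj : Projective C (φ, p) (c, b ⊔ c)) : CutByLinked C p φ c (b ⊔ c) := by
  have hC := hF.toIsCongruenceLattice
  obtain ⟨hbp, η, hη, hbcη, hbη, hl⟩ := h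
  have hprime := hbc.sup_right hC hF.modular hc
  obtain ⟨η', hcη', hdη', hη', hpersp⟩ :=
    hprime.exists_isCMI_persp hC hF.regular hc le_rfl hprime.lt.not_ge
  have hcover : η' ⊔ (b ⊔ c) = p := (hF.pip_cover φ η' p _ hφ hη' (hproj.tail hpersp)).symm
  rw [hcover] at hη'
  refine ⟨le_sup_right.trans hcover.le, η', hη', hcη', hdη', hl.trans hF hφ hη hη' ?_⟩
  by_cases he : η = η'
  · exact Or.inl he
  · exact Or.inr (hbc.exists_isThirdElement hC hF.modular hbp hη hη' he hbcη
      (inf_le_right.trans hcη') hbη fun hb => hdη' (sup_le hb hcη'))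

end CutByLinked

theorem isPrimeInterval_and_cutByLinked_of_projective {one : A} {C : Set (Setoid A)}
    (hF : IsFregeanLattice one C) {p φ : Setoid A} (hφ : IsCMI C φ p) {J : Setoid A × Setoid A}
    (hJ : Projective C (φ, p) J) : IsPrimeInterval C J.1 J.2 ∧ CutByLinked C p φ J.1 J.2 := by
  induction hJ with
  | refl => exact ⟨hφ.isPrimeInterval, le_rfl, φ, hφ, le_rfl, hφ.lt.not_ge, Or.inl rfl⟩
  | @tail J K hJ hJK ih =>
    have hK := hJ.tail hJK
    obtain ⟨j₁, j₂⟩ := J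
    obtain ⟨k₁, k₂⟩ := K
    obtain ⟨-, -, hk₁, hk₂, hJK⟩ := hJK
    dsimp only at ih hk₁ hk₂ hJK ⊢
    obtain ⟨rfl, rfl⟩ | ⟨rfl, rfl⟩ := hJK
    · exact ⟨ih.1.sup_right hF.toIsCongruenceLattice hF.modular hk₁,
        ih.2.sup_right hF hφ ih.1 hk₁ hK⟩
    · exact ⟨ih.1.inf_left hF.toIsCongruenceLattice hF.modular hk₂, ih.2.inf_left⟩

theorem exists_isThirdElement_of_projective {one : A} {C : Set (Setoid A)}
    (hF : IsFregeanLattice one C) {p φ ψ : Setoid A} (hφ : IsCMI C φ p) (hψ : IsCMI C ψ p)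
    (hne : φ ≠ ψ) (hproj : Projective C (φ, p) (ψ, p)) : ∃ γ, IsThirdElement C p φ ψ γ := by
  obtain ⟨-, -, η, hη, hψη, -, hl⟩ :=
    isPrimeInterval_and_cutByLinked_of_projective hF hφ hproj
  rw [← hψ.eq_of_le hη hψη] at hl
  exact hl.resolve_left hne

theorem PIP.isCMI_projective {C : Set (Setoid A)} (hP : IsPIPCoverInvariant C)
    {μ η p : Setoid A} (h : PIP C μ η) (hη : IsCMI C η p) :
    IsCMI C μ p ∧ Projective C (μ, p) (η, p) := by
  obtain ⟨p', q', hμ, hη', hproj⟩ := h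
  obtain rfl := hη'.cover_unique hη
  obtain rfl := hP μ η p' q' hμ hη' hproj
  exact ⟨hμ, hproj⟩

/-- The paper's `M(α)`. -/
def upperCMI (C : Set (Setoid A)) (α : Setoid A) : Set (Setoid A) :=
  {μ | (∃ q, IsCMI C μ q) ∧ α ≤ μ}

theorem le_of_upperCMI_subset {C : Set (Setoid A)} (hC : IsCongruenceLattice C)
    {α β : Setoid A} (hα : α ∈ C) (h : upperCMI C α ⊆ upperCMI C β) : β ≤ α :=
  fun _ _ hxy => by_contra fun hn => by
    obtain ⟨η, hαη, hηxy, hη⟩ := hC.exists_isCMI hα hn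
    exact hηxy ((h ⟨⟨_, hη⟩, hαη⟩).2 hxy)

theorem upperCMI_inCalS {one : A} {C : Set (Setoid A)} (hF : IsFregeanLattice one C)
    (α : Setoid A) : InCalS C (upperCMI C α) := by
  refine ⟨fun μ hμ => hμ.1, fun μ hμ ν q hν hle => ⟨⟨q, hν⟩, hμ.2.trans hle⟩,
    fun η p hη φ ψ hφ hψ => ?_⟩
  have hle : ∀ {φ}, (φ ∈ upperCMI C α ∧ PIP C φ η) ∨ φ = p → φ ≤ p := by
    rintro φ (⟨-, hφη⟩ | rfl)
    exacts [(hφη.isCMI_projective hF.pip_cover hη).1.le, le_rfl]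
  rcases hφ with ⟨hφα, hφη⟩ | rfl
  swap
  · exact ⟨ψ, hψ, (bul_cover_left (hle hψ)).symm⟩
  rcases hψ with ⟨hψα, hψη⟩ | rfl
  swap
  · exact ⟨φ, Or.inl ⟨hφα, hφη⟩, by rw [bul_comm, bul_cover_left (hle (Or.inl ⟨hφα, hφη⟩))]⟩
  by_cases hne : φ = ψ
  · subst hne
    exact ⟨p, Or.inr rfl, (bul_self p φ).symm⟩
  obtain ⟨hφp, hφproj⟩ := hφη.isCMI_projective hF.pip_cover hη
  obtain ⟨hψp, hψproj⟩ := hψη.isCMI_projective hF.pip_cover hη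
  obtain ⟨γ, hγ⟩ := exists_isThirdElement_of_projective hF hφp hψp hne (hφproj.trans hψproj.symm)
  have hγp := hγ.isCMI hF.toIsCongruenceLattice hF.modular hφp hψp hF.regular hF.pip_cover
  refine ⟨γ, Or.inl ⟨⟨⟨p, hγp⟩, (le_inf hφα.2 hψα.2).trans hγ.inf_le⟩, p, p, hγp, hη,
    (hγ.projective hF.toIsCongruenceLattice hF.modular hφp hψp).trans hφproj⟩,
    hγ.rel_eq hF hφp hψp⟩

namespace InCalS

variable {one : A} {C S : Set (Setoid A)} {η μ μ₁ μ₂ p : Setoid A}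

theorem subset (hS : InCalS C S) : S ⊆ C := fun _ hμ =>
  let ⟨_, hμ⟩ := hS.1 _ hμ
  hμ.mem

theorem mem_of_le (hS : InCalS C S) (hμ : μ ∈ S) (hη : IsCMI C η p) (hle : μ ≤ η) : η ∈ S :=
  hS.2.1 μ hμ η p hη hle

theorem mem_of_inf_le (hF : IsFregeanLattice one C) (hS : InCalS C S) (hη : IsCMI C η p)
    (h₁ : μ₁ = ⊤ ∨ μ₁ ∈ S ∧ PIP C μ₁ η) (h₂ : μ₂ = ⊤ ∨ μ₂ ∈ S ∧ PIP C μ₂ η)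
    (hle : μ₁ ⊓ μ₂ ≤ η) : η ∈ S := by
  rcases h₁ with rfl | ⟨hμ₁, hμ₁η⟩ <;> rcases h₂ with rfl | ⟨hμ₂, hμ₂η⟩
  · exact absurd (top_le_iff.mp (by simpa using hle)) hη.lt.ne_top
  · exact hS.mem_of_le hμ₂ hη (by simpa using hle)
  · exact hS.mem_of_le hμ₁ hη (by simpa using hle)
  by_cases h1η : μ₁ ≤ η
  · exact hS.mem_of_le hμ₁ hη h1η
  by_cases h2η : μ₂ ≤ η
  · exact hS.mem_of_le hμ₂ hη h2η
  obtain ⟨h1, -⟩ := hμ₁η.isCMI_projective hF.pip_cover hη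
  obtain ⟨h2, -⟩ := hμ₂η.isCMI_projective hF.pip_cover hη
  have hthird : IsThirdElement C p μ₁ μ₂ η :=
    ⟨hη.mem, hle, hη.le, fun he => h1η (hη.eq_of_le h1 (he.le.trans inf_le_left)).ge,
      fun he => h1η he.ge, fun he => h2η he.ge, hη.lt.ne⟩
  -- `η` and the product `σ = μ₁ • μ₂ ∈ S ∪ {p}` are the same relation
  obtain ⟨σ, hσ, hσr⟩ := hS.2.2 η p hη μ₁ μ₂ (Or.inl ⟨hμ₁, hμ₁η⟩) (Or.inl ⟨hμ₂, hμ₂η⟩)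
  have hσr' : σ.r = η.r := hσr.trans (hthird.rel_eq hF h1 h2).symm
  have hση : σ = η := Setoid.ext fun x y => iff_of_eq (congrFun (congrFun hσr' x) y)
  rcases hσ with ⟨hσS, -⟩ | hσp
  · exact hση ▸ hσS
  · exact absurd (hση.symm.trans hσp) hη.lt.ne

theorem mem_of_sInf_le (hF : IsFregeanLattice one C) (hD : IsPIPDistributive C)
    (hS : InCalS C S) {T : Set (Setoid A)} (hT : T.Finite) (hTS : T ⊆ S) (hη : IsCMI C η p)
    (hle : sInf T ≤ η) : η ∈ S := by
  induction T, hT using Set.Finite.induction_on generalizing η p with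
  | empty =>
    rw [sInf_empty, top_le_iff] at hle
    exact absurd hle hη.lt.ne_top
  | @insert μ T _ _ ih =>
    have hTS' : T ⊆ S := (Set.subset_insert μ T).trans hTS
    have hμ : μ ∈ S := hTS (Set.mem_insert μ T)
    rw [sInf_insert, inf_comm] at hle
    obtain ⟨μ₁, μ₂, h₁, h₂, hTμ₁, hμμ₂, hle'⟩ :=
      hD _ (hF.sInf_mem T (hTS'.trans hS.subset)) μ (hS.subset hμ) η p hη hle
    exact hS.mem_of_inf_le hF hη
      (h₁.imp_right fun h => ⟨ih hTS' (h.isCMI_projective hF.pip_cover hη).1 hTμ₁, h⟩)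
      (h₂.imp_right fun h => ⟨hS.mem_of_le hμ (h.isCMI_projective hF.pip_cover hη).1 hμμ₂, h⟩)
      hle'

theorem upperCMI_sInf (hF : IsFregeanLattice one C) (hD : IsPIPDistributive C)
    (hS : InCalS C S) (hfin : S.Finite) : upperCMI C (sInf S) = S :=
  Set.ext fun _ => ⟨fun ⟨⟨_, hμ⟩, hle⟩ => hS.mem_of_sInf_le hF hD hfin Set.Subset.rfl hμ hle,
    fun hμ => ⟨hS.1 _ hμ, sInf_le hμ⟩⟩

end InCalS

/-- Theorem 18: (1) the map `M : C → 𝒮`, `M(α) = {μ ∈ Cm : α ≤ μ}`, is well defined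
and injective; (2) if moreover `A` is finite and condition (D) holds, then `M` is a
bijection between `C` and `𝒮`. -/
theorem stmt14 (one : A) (C : Set (Setoid A))
    (hInf : ∀ S ⊆ C, sInf S ∈ C) (hSup : ∀ S ⊆ C, sSup S ∈ C)
    (hDir : ∀ D ⊆ C, D.Nonempty → DirectedOn (· ≤ ·) D →
      ∀ x y : A, (sSup D).r x y ↔ ∃ s ∈ D, s.r x y)
    (hM : ∀ x ∈ C, ∀ y ∈ C, ∀ z ∈ C, x ≤ z → x ⊔ y ⊓ z = (x ⊔ y) ⊓ z)
    (hO : ∀ α ∈ C, ∀ a b : A, α ⊔ theta C one a = α ⊔ theta C one b ↔ α.r a b)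
    (hR : ∀ α ∈ C, ∀ β ∈ C, (∀ x : A, α.r one x ↔ β.r one x) → α = β)
    (hP : ∀ φ ψ p q : Setoid A, IsCMI C φ p → IsCMI C ψ q →
      Projective C (φ, p) (ψ, q) → p = q) :
    ((∀ α ∈ C, InCalS C {μ | (∃ q, IsCMI C μ q) ∧ α ≤ μ}) ∧
      (∀ α ∈ C, ∀ β ∈ C,
        {μ | (∃ q, IsCMI C μ q) ∧ α ≤ μ} = {μ | (∃ q, IsCMI C μ q) ∧ β ≤ μ} → α = β)) ∧
    (Finite A →
      (∀ α ∈ C, ∀ β ∈ C, ∀ η p, IsCMI C η p → α ⊓ β ≤ η →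
        ∃ μ₁ μ₂ : Setoid A, (μ₁ = ⊤ ∨ PIP C μ₁ η) ∧ (μ₂ = ⊤ ∨ PIP C μ₂ η) ∧
          α ≤ μ₁ ∧ β ≤ μ₂ ∧ μ₁ ⊓ μ₂ ≤ η) →
      ∀ S, InCalS C S → ∃ α ∈ C, {μ | (∃ q, IsCMI C μ q) ∧ α ≤ μ} = S) := by
  have hF : IsFregeanLattice one C := ⟨⟨hInf, hSup, hDir⟩, hM, hO, hR, hP⟩
  refine ⟨⟨fun α _ => upperCMI_inCalS hF α, fun α hα β hβ h =>
    le_antisymm (le_of_upperCMI_subset hF.toIsCongruenceLattice hβ h.ge)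
      (le_of_upperCMI_subset hF.toIsCongruenceLattice hα h.le)⟩, fun _ hD S hS => ?_⟩
  have : Finite (Setoid A) := Finite.of_injective (fun s : Setoid A => s.r) fun s t h =>
    Setoid.ext fun x y => iff_of_eq (congrFun (congrFun h x) y)
  exact ⟨sInf S, hInf S hS.subset, hS.upperCMI_sInf hF hD (Set.toFinite S)⟩
end

section
/- Assume condition (O), and suppose there is a binary operation e : A × A → A which is a principal congruence term, i.e., Θ(a,b) = Θ(1, e(a,b)) for all a, b ∈ A. Then M(e(a,b)) = M(a) ↔ M(b) for all a, b ∈ A, that is, {μ ∈ Cm : (1, e(a,b)) ∈ μ} = Cm \ ((M(a) Δ M(b))↓). (This is Corollary 23 of the paper: the map M preserves the equivalence operation.) -/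
/-!
If `(1, e(a,b)) ∉ μ`, Zorn's lemma enlarges `μ` to a member `m` of `C` maximal with respect to
omitting `(1, e(a,b))`; such an `m` is completely meet irreducible with cover `m ⊔ Θ(1, e(a,b))`,
which contains `(a,b)` because `Θ(a,b) = Θ(1, e(a,b))`. Condition (O) then forces `m` to contain
exactly one of `(1,a)` and `(1,b)`, i.e. `m ∈ M(a) Δ M(b)`. Conversely, if `(1, e(a,b)) ∈ μ` then
`(a,b)` lies in every `φ ≥ μ`, so no such `φ` separates `M(a)` from `M(b)`.
-/

variable {A : Type*}

/-- The set of completely meet irreducible members of `C`. -/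
def CmSet (C : Set (Setoid A)) : Set (Setoid A) := {μ | ∃ p, IsCMI C μ p}

/-- `M(a) = {μ ∈ Cm : (1,a) ∈ μ}`. -/
def MsetA (C : Set (Setoid A)) (one a : A) : Set (Setoid A) :=
  {μ | μ ∈ CmSet C ∧ μ.r one a}

/-- The downward closure `X↓` of `X` inside the poset `Cm`. -/
def DownCl (C : Set (Setoid A)) (X : Set (Setoid A)) : Set (Setoid A) :=
  {μ | μ ∈ CmSet C ∧ ∃ φ ∈ X, μ ≤ φ}

/-- The equivalence operation `S ↔ T := Cm \ ((S Δ T)↓)` of the Heyting algebra of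
upward closed subsets of `Cm`. -/
def EqOpU (C : Set (Setoid A)) (S T : Set (Setoid A)) : Set (Setoid A) :=
  CmSet C \ DownCl C ((S \ T) ∪ (T \ S))

variable {C : Set (Setoid A)}

theorem mem_of_mem_cmSet {μ : Setoid A} (h : μ ∈ CmSet C) : μ ∈ C :=
  let ⟨_, hμ⟩ := h; hμ.1

theorem theta_mem (hInf : ∀ S ⊆ C, sInf S ∈ C) (x y : A) : theta C x y ∈ C :=
  hInf _ fun _ hs => hs.1

theorem rel_theta_s18 (x y : A) : (theta C x y).r x y :=
  fun _ hs => hs.2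

theorem theta_le_iff {s : Setoid A} (hs : s ∈ C) {x y : A} : theta C x y ≤ s ↔ s.r x y :=
  ⟨fun h => h (rel_theta_s18 x y), fun h => sInf_le ⟨hs, h⟩⟩

theorem rel_iff_of_theta_eq {a b c d : A} (h : theta C a b = theta C c d) {s : Setoid A}
    (hs : s ∈ C) : s.r a b ↔ s.r c d := by
  rw [← theta_le_iff hs, ← theta_le_iff hs, h]

theorem sup_mem (hSup : ∀ S ⊆ C, sSup S ∈ C) {s t : Setoid A} (hs : s ∈ C) (ht : t ∈ C) :
    s ⊔ t ∈ C := by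
  rw [← sSup_pair]
  exact hSup _ (Set.insert_subset hs (Set.singleton_subset_iff.2 ht))

theorem exists_isCMI_of_not_rel (hInf : ∀ S ⊆ C, sInf S ∈ C) (hSup : ∀ S ⊆ C, sSup S ∈ C)
    (hDir : ∀ D ⊆ C, D.Nonempty → DirectedOn (· ≤ ·) D →
      ∀ x y : A, (sSup D).r x y ↔ ∃ s ∈ D, s.r x y)
    {μ : Setoid A} (hμ : μ ∈ C) {x y : A} (h : ¬ μ.r x y) :
    ∃ m p, IsCMI C m p ∧ μ ≤ m ∧ ¬ m.r x y ∧ p.r x y := by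
  obtain ⟨m, hμm, hmax⟩ := zorn_le_nonempty₀ {s | s ∈ C ∧ ¬ s.r x y}
    (fun c hc hchain z hz => by
      have hcC : c ⊆ C := fun s hs => (hc hs).1
      refine ⟨sSup c, ⟨hSup c hcC, fun hr => ?_⟩, fun _ => le_sSup⟩
      obtain ⟨s, hs, hsr⟩ := (hDir c hcC ⟨z, hz⟩ hchain.directedOn x y).1 hr
      exact (hc hs).2 hsr) μ ⟨hμ, h⟩
  obtain ⟨hmC, hmr⟩ := hmax.prop
  have hsup : (m ⊔ theta C x y).r x y := le_sup_right (a := m) (rel_theta_s18 x y)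
  refine ⟨m, m ⊔ theta C x y, ⟨hmC, sup_mem hSup hmC (theta_mem hInf x y), ?_, ?_⟩,
    hμm, hmr, hsup⟩
  · exact lt_of_le_of_ne le_sup_left fun h => hmr (h ▸ hsup)
  · intro β hβ hmβ
    refine sup_le hmβ.le ((theta_le_iff hβ).2 ?_)
    by_contra hβr
    exact hmβ.not_ge (hmax.le_of_ge ⟨hβ, hβr⟩ hmβ.le)

theorem IsCMI.le_sup_theta (hInf : ∀ S ⊆ C, sInf S ∈ C) (hSup : ∀ S ⊆ C, sSup S ∈ C)
    {m p : Setoid A} (hm : IsCMI C m p) {x y : A} (h : ¬ m.r x y) : p ≤ m ⊔ theta C x y := by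
  refine hm.2.2.2 _ (sup_mem hSup hm.1 (theta_mem hInf x y)) (lt_of_le_of_ne le_sup_left ?_)
  intro heq
  exact h (heq ▸ le_sup_right (a := m) (rel_theta_s18 x y))

theorem not_rel_iff_of_isCMI (hInf : ∀ S ⊆ C, sInf S ∈ C) (hSup : ∀ S ⊆ C, sSup S ∈ C)
    (one : A) (hO : ∀ α ∈ C, ∀ a b : A, α ⊔ theta C one a = α ⊔ theta C one b ↔ α.r a b)
    {m p : Setoid A} (hm : IsCMI C m p) {a b : A} (hab : ¬ m.r a b) (hp : p.r a b) :
    ¬ (m.r one a ↔ m.r one b) := by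
  intro hiff
  by_cases ha : m.r one a
  · exact hab (m.trans' (m.symm' ha) (hiff.1 ha))
  have hb : ¬ m.r one b := fun hb => ha (hiff.2 hb)
  have hpa := hm.le_sup_theta hInf hSup ha
  have hpb := hm.le_sup_theta hInf hSup hb
  have hC : ∀ x, m ⊔ theta C one x ∈ C := fun x => sup_mem hSup hm.1 (theta_mem hInf one x)
  refine hab ((hO m hm.1 a b).1 (le_antisymm ?_ ?_))
  · refine sup_le le_sup_left ((theta_le_iff (hC b)).2 ?_)
    exact (m ⊔ theta C one b).trans' (le_sup_right (a := m) (rel_theta_s18 one b))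
      ((m ⊔ theta C one b).symm' (hpb hp))
  · refine sup_le le_sup_left ((theta_le_iff (hC a)).2 ?_)
    exact (m ⊔ theta C one a).trans' (le_sup_right (a := m) (rel_theta_s18 one a)) (hpa hp)

theorem mem_symmDiff_MsetA_iff {one a b : A} {m : Setoid A} :
    m ∈ (MsetA C one a \ MsetA C one b) ∪ (MsetA C one b \ MsetA C one a) ↔
      m ∈ CmSet C ∧ ¬ (m.r one a ↔ m.r one b) := by
  simp only [MsetA, Set.mem_union, Set.mem_sdiff, Set.mem_ofPred_eq]
  tauto

/-- Corollary 23: under (O), if `e` is a principal congruence term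
(`Θ(a,b) = Θ(1, e(a,b))`), then `M(e(a,b)) = M(a) ↔ M(b)`, i.e.
`{μ ∈ Cm : (1, e(a,b)) ∈ μ} = Cm \ ((M(a) Δ M(b))↓)`. -/
theorem stmt18 (one : A) (C : Set (Setoid A))
    (hInf : ∀ S ⊆ C, sInf S ∈ C) (hSup : ∀ S ⊆ C, sSup S ∈ C)
    (hDir : ∀ D ⊆ C, D.Nonempty → DirectedOn (· ≤ ·) D →
      ∀ x y : A, (sSup D).r x y ↔ ∃ s ∈ D, s.r x y)
    (hO : ∀ α ∈ C, ∀ a b : A, α ⊔ theta C one a = α ⊔ theta C one b ↔ α.r a b)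
    (e : A → A → A) (he : ∀ a b : A, theta C a b = theta C one (e a b)) :
    ∀ a b : A, MsetA C one (e a b) = EqOpU C (MsetA C one a) (MsetA C one b) := by
  intro a b
  ext μ
  constructor
  · rintro ⟨hμ, hμe⟩
    refine ⟨hμ, fun ⟨_, φ, hφ, hμφ⟩ => ?_⟩
    have hφab : φ.r a b := hμφ ((rel_iff_of_theta_eq (he a b) (mem_of_mem_cmSet hμ)).2 hμe)
    exact (mem_symmDiff_MsetA_iff.1 hφ).2
      ⟨fun h => φ.trans' h hφab, fun h => φ.trans' h (φ.symm' hφab)⟩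
  · rintro ⟨hμ, hμsep⟩
    refine ⟨hμ, by_contra fun hμe => ?_⟩
    obtain ⟨m, p, hm, hμm, hme, hpe⟩ :=
      exists_isCMI_of_not_rel hInf hSup hDir (mem_of_mem_cmSet hμ) hμe
    have hmab : ¬ m.r a b := fun h => hme ((rel_iff_of_theta_eq (he a b) hm.1).1 h)
    have hpab : p.r a b := (rel_iff_of_theta_eq (he a b) hm.2.1).2 hpe
    exact hμsep ⟨hμ, m, mem_symmDiff_MsetA_iff.2
      ⟨⟨p, hm⟩, not_rel_iff_of_isCMI hInf hSup one hO hm hmab hpab⟩, hμm⟩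
end
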